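/- Let G ∈ 𝕆^{n×k} with tr(GᵀD) ≠ 0 satisfy the first-order conditions GᵀD = DᵀG and A G − ξ(G) D = G M(G). If for every nonzero real n×k matrix H satisfying HᵀG = −GᵀH the strict inequality tr(DᵀH)² < η(G)·(tr(HᵀAH) − tr(H M(G) Hᵀ)) holds, then G is a local maximizer of η on 𝕆^{n×k}. -/

import Mathlib

open Matrix

/-- The objective `η(G) = tr(GᵀD)² / tr(GᵀAG)`. -/
noncomputable def eta {n k : ℕ} (A : Matrix (Fin n) (Fin n) ℝ)
    (D G : Matrix (Fin n) (Fin k) ℝ) : ℝ :=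
  (Matrix.trace (Gᵀ * D)) ^ 2 / Matrix.trace (Gᵀ * A * G)

/-- `ξ(G) = tr(GᵀAG) / tr(GᵀD)`. -/
noncomputable def xi {n k : ℕ} (A : Matrix (Fin n) (Fin n) ℝ)
    (D G : Matrix (Fin n) (Fin k) ℝ) : ℝ :=
  Matrix.trace (Gᵀ * A * G) / Matrix.trace (Gᵀ * D)

/-- `sym(B) = (B + Bᵀ)/2`. -/
noncomputable def symPart {k : ℕ} (B : Matrix (Fin k) (Fin k) ℝ) : Matrix (Fin k) (Fin k) ℝ :=
  (1 / 2 : ℝ) • (B + Bᵀ)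

/-- `M(G) = sym(GᵀAG − ξ(G)·GᵀD)`. -/
noncomputable def Mmat {n k : ℕ} (A : Matrix (Fin n) (Fin n) ℝ)
    (D G : Matrix (Fin n) (Fin k) ℝ) : Matrix (Fin k) (Fin k) ℝ :=
  symPart (Gᵀ * A * G - xi A D G • (Gᵀ * D))

/-- `E(G) = A − ξ(G)·(DGᵀ + GDᵀ)`. -/
noncomputable def Emat {n k : ℕ} (A : Matrix (Fin n) (Fin n) ℝ)
    (D G : Matrix (Fin n) (Fin k) ℝ) : Matrix (Fin n) (Fin n) ℝ :=
  A - xi A D G • (D * Gᵀ + G * Dᵀ)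

/-- The Frobenius norm of a real matrix. -/
noncomputable def frobNorm {n k : ℕ} (M : Matrix (Fin n) (Fin k) ℝ) : ℝ :=
  Real.sqrt (∑ i, ∑ j, (M i j) ^ 2)

/-- `G` is a local maximizer of `η` on the Stiefel manifold `𝕆^{n×k}`. -/
def IsLocalMaxEta {n k : ℕ} (A : Matrix (Fin n) (Fin n) ℝ)
    (D G : Matrix (Fin n) (Fin k) ℝ) : Prop :=
  Gᵀ * G = 1 ∧ ∃ ε > (0 : ℝ), ∀ G' : Matrix (Fin n) (Fin k) ℝ,
    G'ᵀ * G' = 1 → frobNorm (G' - G) < ε → eta A D G' ≤ eta A D G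

/-! Write `G' = G + H`. On the Stiefel manifold `GᵀH + HᵀG + HᵀH = 0`, and with the first-order
condition `AG − ξD = GM` this turns `tr(GᵀD)² tr(G'ᵀAG') − tr(G'ᵀD)² tr(GᵀAG)` into exactly
`tr(GᵀAG)` times the quadratic form `Q(H)` of the second-order condition, so `η(G') ≤ η(G)` as soon
as `Q(H) ≥ 0`. The form `Q` is positive on the tangent space `GᵀH + HᵀG = 0` minus `0`, and for
small admissible `H` the direction `H / ‖H‖` is close to that tangent space; compactness of the unit
sphere gives `Q(H) ≥ 0` for all such `H`. -/

open Filter Topology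

theorem eventually_nonneg_of_pos_on_tangent {E F : Type*} [NormedAddCommGroup E]
    [NormedSpace ℝ E] [FiniteDimensional ℝ E] [NormedAddCommGroup F] [NormedSpace ℝ F]
    {Q : E → ℝ} {L B : E → F} (hQ : Continuous Q) (hL : Continuous L) (hB : Continuous B)
    (hQ_smul : ∀ (c : ℝ) x, Q (c • x) = c ^ 2 * Q x) (hL_smul : ∀ (c : ℝ) x, L (c • x) = c • L x)
    (hB_smul : ∀ (c : ℝ) x, B (c • x) = c ^ 2 • B x)
    (hpos : ∀ x, x ≠ 0 → L x = 0 → 0 < Q x) :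
    ∀ᶠ h in 𝓝 (0 : E), L h + B h = 0 → 0 ≤ Q h := by
  -- `max Q ‖L‖` is bounded below by some `δ > 0` on the unit sphere, while for an admissible
  -- `h = r • u` the constraint makes `‖L u‖ ≤ r ‖B u‖` small; hence `Q u ≥ δ`.
  have hS : IsCompact (Metric.sphere (0 : E) 1) := isCompact_sphere 0 1
  obtain ⟨δ, hδ, hδS⟩ := hS.exists_forall_le' (f := fun u => max (Q u) ‖L u‖)
    (by fun_prop) (a := 0) fun u hu => by
      rcases eq_or_ne (L u) 0 with hLu | hLu
      · exact lt_max_of_lt_left (hpos u (ne_zero_of_mem_unit_sphere ⟨u, hu⟩) hLu)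
      · exact lt_max_of_lt_right (norm_pos_iff.2 hLu)
  obtain ⟨C, hC⟩ := hS.exists_bound_of_continuousOn hB.continuousOn
  filter_upwards [Metric.ball_mem_nhds (0 : E) (show 0 < δ / (|C| + 1) by positivity)]
    with h hh hc
  rcases eq_or_ne h 0 with rfl | h0
  · exact (by simpa using hQ_smul 0 0 : Q 0 = 0).ge
  set r := ‖h‖
  have hr : 0 < r := norm_pos_iff.2 h0
  set u := r⁻¹ • h
  have hu : u ∈ Metric.sphere (0 : E) 1 := by
    simp [u, norm_smul, r, inv_mul_cancel₀ hr.ne']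
  have hhu : h = r • u := (smul_inv_smul₀ hr.ne' h).symm
  have hLu : L u = -(r • B u) := by
    rw [hhu, hL_smul, hB_smul, pow_two, mul_smul, ← smul_add, smul_eq_zero] at hc
    exact eq_neg_of_add_eq_zero_left (hc.resolve_left hr.ne')
  have hLu_lt : ‖L u‖ < δ := calc
    ‖L u‖ = r * ‖B u‖ := by rw [hLu, norm_neg, norm_smul, Real.norm_of_nonneg hr.le]
    _ ≤ r * |C| := by gcongr; exact (hC u hu).trans (le_abs_self C)
    _ < δ := by
      rw [mem_ball_zero_iff, lt_div_iff₀ (by positivity)] at hh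
      nlinarith [abs_nonneg C]
  have hQu : 0 < Q u := hδ.trans_le ((le_max_iff.1 (hδS u hu)).resolve_right hLu_lt.not_ge)
  rw [hhu, hQ_smul]
  positivity

theorem trace_transpose_mul_mul_pos {m n : Type*} [Fintype m] [Fintype n] [DecidableEq n]
    [Nonempty n] {A : Matrix m m ℝ} (hA : A.PosDef) {G : Matrix m n ℝ} (hG : Gᵀ * G = 1) :
    0 < (Gᵀ * A * G).trace := by
  have hinj : Function.Injective G.mulVec := Function.LeftInverse.injective (g := Gᵀ.mulVec)
    fun x => by rw [mulVec_mulVec, hG, one_mulVec]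
  simpa using (hA.conjTranspose_mul_mul_same hinj).trace_pos

theorem transpose_mul_sub_add_eq_zero {m n α : Type*} [Fintype m] [Ring α]
    {G G' : Matrix m n α} (h : G'ᵀ * G' = Gᵀ * G) :
    Gᵀ * (G' - G) + (G' - G)ᵀ * G + (G' - G)ᵀ * (G' - G) = 0 := by
  simp only [transpose_sub, Matrix.sub_mul, Matrix.mul_sub, h]
  abel

theorem symPart_transpose {k : ℕ} (B : Matrix (Fin k) (Fin k) ℝ) :
    (symPart B)ᵀ = symPart B := by
  rw [symPart, transpose_smul, transpose_add, transpose_transpose, add_comm]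

section

variable {n k : ℕ} (A : Matrix (Fin n) (Fin n) ℝ) (D G : Matrix (Fin n) (Fin k) ℝ)

noncomputable def secondOrderForm (H : Matrix (Fin n) (Fin k) ℝ) : ℝ :=
  eta A D G * ((Hᵀ * A * H).trace - (H * Mmat A D G * Hᵀ).trace) - (Dᵀ * H).trace ^ 2

theorem secondOrderForm_smul (c : ℝ) (H : Matrix (Fin n) (Fin k) ℝ) :
    secondOrderForm A D G (c • H) = c ^ 2 * secondOrderForm A D G H := by
  simp only [secondOrderForm, transpose_smul, smul_mul, Matrix.mul_smul, trace_smul, smul_eq_mul]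
  ring

theorem continuous_secondOrderForm : Continuous (secondOrderForm A D G) := by
  unfold secondOrderForm
  fun_prop

variable {A D G}

theorem trace_add_transpose_mul_mul_add (hA : A.IsSymm)
    (hfo : A * G - xi A D G • D = G * Mmat A D G) {H : Matrix (Fin n) (Fin k) ℝ}
    (hH : Gᵀ * H + Hᵀ * G + Hᵀ * H = 0) :
    ((G + H)ᵀ * A * (G + H)).trace = (Gᵀ * A * G).trace + 2 * xi A D G * (Dᵀ * H).trace
      + (Hᵀ * A * H).trace - (H * Mmat A D G * Hᵀ).trace := by
  set M := Mmat A D G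
  have hM : Mᵀ = M := symPart_transpose _
  have hcross : (Gᵀ * A * H).trace = (Hᵀ * A * G).trace := by
    rw [← trace_transpose]
    simp only [transpose_mul, transpose_transpose, hA.eq, Matrix.mul_assoc]
  have hAG : A * G = xi A D G • D + G * M := by rw [← hfo]; abel
  have hHAG : (Hᵀ * A * G).trace = xi A D G * (Dᵀ * H).trace + (Hᵀ * G * M).trace := by
    rw [Matrix.mul_assoc, hAG, Matrix.mul_add, trace_add, Matrix.mul_smul, trace_smul,
      smul_eq_mul, ← trace_transpose (Hᵀ * D), transpose_mul, transpose_transpose,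
      Matrix.mul_assoc]
  have hHGM : 2 * (Hᵀ * G * M).trace = -(H * M * Hᵀ).trace := calc
    2 * (Hᵀ * G * M).trace = ((Hᵀ * G + Gᵀ * H) * M).trace := by
      rw [Matrix.add_mul, trace_add, two_mul, ← trace_transpose (Gᵀ * H * M), trace_mul_comm]
      simp only [transpose_mul, transpose_transpose, hM, Matrix.mul_assoc]
    _ = -((Hᵀ * H) * M).trace := by
      rw [show Hᵀ * G + Gᵀ * H = -(Hᵀ * H) by rw [← sub_eq_zero, ← hH]; abel,
        Matrix.neg_mul, trace_neg]
    _ = -(H * M * Hᵀ).trace := by rw [Matrix.mul_assoc, trace_mul_comm, Matrix.mul_assoc]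
  simp only [transpose_add, Matrix.add_mul, Matrix.mul_add, trace_add, hcross, hHAG]
  linear_combination hHGM

theorem eta_le_of_secondOrderForm_nonneg [NeZero k] (hA : A.PosDef) (hG : Gᵀ * G = 1)
    (htr : (Gᵀ * D).trace ≠ 0) (hfo : A * G - xi A D G • D = G * Mmat A D G)
    {G' : Matrix (Fin n) (Fin k) ℝ} (hG' : G'ᵀ * G' = 1)
    (hQ : 0 ≤ secondOrderForm A D G (G' - G)) :
    eta A D G' ≤ eta A D G := by
  set H := G' - G
  have hGH : G' = G + H := (add_sub_cancel G G').symm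
  have hH : Gᵀ * H + Hᵀ * G + Hᵀ * H = 0 := transpose_mul_sub_add_eq_zero (hG'.trans hG.symm)
  have hq : 0 < (Gᵀ * A * G).trace := trace_transpose_mul_mul_pos hA hG
  have hq' : 0 < (G'ᵀ * A * G').trace := trace_transpose_mul_mul_pos hA hG'
  have hxi : (Gᵀ * D).trace * xi A D G = (Gᵀ * A * G).trace := mul_div_cancel₀ _ htr
  have hlin : (G'ᵀ * D).trace = (Gᵀ * D).trace + (Dᵀ * H).trace := by
    rw [hGH, transpose_add, Matrix.add_mul, trace_add, ← trace_transpose (Hᵀ * D),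
      transpose_mul, transpose_transpose]
  have hquad := trace_add_transpose_mul_mul_add (isHermitian_iff_isSymm.1 hA.isHermitian) hfo hH
  rw [← hGH] at hquad
  unfold eta
  rw [div_le_div_iff₀ hq' hq, hlin, hquad]
  unfold secondOrderForm eta at hQ
  have hQ' : 0 ≤ (Gᵀ * D).trace ^ 2 * ((Hᵀ * A * H).trace - (H * Mmat A D G * Hᵀ).trace)
      - (Gᵀ * A * G).trace * (Dᵀ * H).trace ^ 2 := by
    have := mul_nonneg hq.le hQ
    rwa [mul_sub, ← mul_assoc, mul_div_cancel₀ _ hq.ne'] at this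
  linear_combination hQ' - 2 * (Gᵀ * D).trace * (Dᵀ * H).trace * hxi

end

open scoped Matrix.Norms.Frobenius

theorem frobNorm_eq_norm {n k : ℕ} (M : Matrix (Fin n) (Fin k) ℝ) : frobNorm M = ‖M‖ := by
  simp [frobNorm, Matrix.frobenius_norm_def, Real.sqrt_eq_rpow]

theorem localMax_of_secondOrder_sufficient_general
    (n k : ℕ) (hk1 : 1 ≤ k)
    (A : Matrix (Fin n) (Fin n) ℝ) (hA : A.PosDef)
    (D : Matrix (Fin n) (Fin k) ℝ)
    (G : Matrix (Fin n) (Fin k) ℝ) (hG : Gᵀ * G = 1)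
    (htr : Matrix.trace (Gᵀ * D) ≠ 0)
    (hfo2 : A * G - xi A D G • D = G * Mmat A D G)
    (hso : ∀ H : Matrix (Fin n) (Fin k) ℝ, H ≠ 0 → Hᵀ * G = -(Gᵀ * H) →
      (Matrix.trace (Dᵀ * H)) ^ 2 <
        eta A D G *
          (Matrix.trace (Hᵀ * A * H) - Matrix.trace (H * Mmat A D G * Hᵀ))) :
    IsLocalMaxEta A D G := by
  have : NeZero k := ⟨by omega⟩
  have hnear : ∀ᶠ H in 𝓝 0, Gᵀ * H + Hᵀ * G + Hᵀ * H = 0 → 0 ≤ secondOrderForm A D G H :=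
    eventually_nonneg_of_pos_on_tangent (continuous_secondOrderForm A D G) (by fun_prop)
      (by fun_prop) (secondOrderForm_smul A D G)
      (fun c H => by simp only [transpose_smul, smul_mul, Matrix.mul_smul, smul_add])
      (fun c H => by simp only [transpose_smul, smul_mul, Matrix.mul_smul, smul_smul, sq])
      fun H hH hL => sub_pos.2 (hso H hH (eq_neg_of_add_eq_zero_right hL))
  obtain ⟨ε, hε, hball⟩ := Metric.eventually_nhds_iff.1 hnear
  refine ⟨hG, ε, hε, fun G' hG' hG'G => eta_le_of_secondOrderForm_nonneg hA hG htr hfo2 hG' ?_⟩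
  exact hball (by rwa [dist_zero_right, ← frobNorm_eq_norm])
    (transpose_mul_sub_add_eq_zero (hG'.trans hG.symm))

/-- second-order sufficient condition: if `G ∈ 𝕆^{n×k}` satisfies the first-order
conditions and the strict second-order inequality holds for all nonzero `H` with `HᵀG = −GᵀH`,
then `G` is a local maximizer of `η` on `𝕆^{n×k}`. -/
theorem localMax_of_secondOrder_sufficient
    (n k : ℕ) (hk1 : 1 ≤ k) (hkn : k < n)
    (A : Matrix (Fin n) (Fin n) ℝ) (hA : A.PosDef)
    (D : Matrix (Fin n) (Fin k) ℝ)
    (G : Matrix (Fin n) (Fin k) ℝ) (hG : Gᵀ * G = 1)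
    (htr : Matrix.trace (Gᵀ * D) ≠ 0)
    (hfo1 : Gᵀ * D = Dᵀ * G)
    (hfo2 : A * G - xi A D G • D = G * Mmat A D G)
    (hso : ∀ H : Matrix (Fin n) (Fin k) ℝ, H ≠ 0 → Hᵀ * G = -(Gᵀ * H) →
      (Matrix.trace (Dᵀ * H)) ^ 2 <
        eta A D G *
          (Matrix.trace (Hᵀ * A * H) - Matrix.trace (H * Mmat A D G * Hᵀ))) :
    IsLocalMaxEta A D G :=
  localMax_of_secondOrder_sufficient_general n k hk1 A hA D G hG htr hfo2 hso
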